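/- arXiv:2508.13016 — 2 statements merged into one kernel-verified Lean document; each statement's English description precedes it below -/
import Mathlib

section
/- Let (x_n) be an interval-filling sequence and suppose there exist indices k < m with x_m < r_m and x_k + x_m < r_k, where r_j = ∑_{n>j} x_n. Then some point of the achievement set has at least 4 distinct subsum representations, i.e., max rng(f) ≥ 4. -/
open Set

/-- The achievement set of a sequence: all subsums. -/
noncomputable def achSet (x : ℕ → ℝ) : Set ℝ :=
  {t | ∃ S : Set ℕ, ∑' n : S, x n = t}

/-- The cardinal function: the number of representations of `t` as a subsum. -/
noncomputable def cardFun (x : ℕ → ℝ) (t : ℝ) : Cardinal :=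
  Cardinal.mk {S : Set ℕ // ∑' n : S, x n = t}

/-- The tail sum `r_k = ∑_{n > k} x n`. -/
noncomputable def tailSum (x : ℕ → ℝ) (k : ℕ) : ℝ := ∑' n, x (k + 1 + n)

/-- Prepending a term to a sequence. -/
def prepend (y : ℝ) (x : ℕ → ℝ) : ℕ → ℝ := fun n =>
  match n with
  | 0 => y
  | Nat.succ m => x m

open Filter Topology

section TailSum

variable {x : ℕ → ℝ}

lemma tsum_eq_add_tailSum (hsum : Summable x) : ∑' n, x n = x 0 + tailSum x 0 := by
  rw [hsum.tsum_eq_zero_add, tailSum]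
  exact congrArg _ (tsum_congr fun n => congrArg x (by omega))

lemma tailSum_succ (hsum : Summable x) (k : ℕ) :
    tailSum x k = x (k + 1) + tailSum x (k + 1) := by
  have hshift : Summable fun n => x (k + 1 + n) := by
    simpa only [add_comm] using (summable_nat_add_iff (k + 1)).2 hsum
  rw [tailSum, hshift.tsum_eq_zero_add, tailSum]
  exact congrArg₂ _ rfl (tsum_congr fun n => congrArg x (by omega))

lemma sum_Ioc_add_tailSum (hsum : Summable x) {k m : ℕ} (hkm : k ≤ m) :
    ∑ j ∈ Finset.Ioc k m, x j + tailSum x m = tailSum x k := by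
  induction m, hkm using Nat.le_induction with
  | base => simp
  | succ m hkm ih =>
    rw [Finset.sum_Ioc_succ_top hkm, ← ih, tailSum_succ hsum m]
    ring

lemma tailSum_nonneg (hx : ∀ n, 0 ≤ x n) (k : ℕ) : 0 ≤ tailSum x k :=
  tsum_nonneg fun _ => hx _

lemma tendsto_tailSum_atTop (x : ℕ → ℝ) : Tendsto (tailSum x) atTop (𝓝 0) := by
  refine ((tendsto_sum_nat_add x).comp (tendsto_add_atTop_nat 1)).congr fun k => ?_
  show ∑' n, x (n + (k + 1)) = tailSum x k
  exact tsum_congr fun n => congrArg x (by omega)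

end TailSum

section Greedy

/-- The remainder left by the greedy algorithm for `s` after it has decided on
`x 0, …, x (n - 1)`, taking a term whenever it still fits. -/
noncomputable def greedyRem (x : ℕ → ℝ) (s : ℝ) : ℕ → ℝ
  | 0 => s
  | n + 1 => if x n ≤ greedyRem x s n then greedyRem x s n - x n else greedyRem x s n

variable {x : ℕ → ℝ} {s : ℝ}

/-- A rejected term `x n` exceeds the remainder, so the interval-filling condition
`x n ≤ tailSum x n` keeps the remainder within reach of the tail. -/
lemma greedyRem_mem_Icc (hsum : Summable x) (hIF : ∀ n, x n ≤ tailSum x n)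
    (hs₀ : 0 ≤ s) (hs : s ≤ ∑' n, x n) (n : ℕ) :
    greedyRem x s n ∈ Icc 0 (x n + tailSum x n) := by
  induction n with
  | zero => exact ⟨hs₀, (tsum_eq_add_tailSum hsum).symm ▸ hs⟩
  | succ n ih =>
    have hn := tailSum_succ hsum n
    have hIFn := hIF n
    simp only [greedyRem]
    split_ifs with h
    · exact ⟨by linarith, by linarith [ih.2]⟩
    · exact ⟨ih.1, by linarith⟩

lemma sum_range_indicator_greedyRem (N : ℕ) :
    ∑ n ∈ Finset.range N, {n | x n ≤ greedyRem x s n}.indicator x n =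
      s - greedyRem x s N := by
  induction N with
  | zero => simp [greedyRem]
  | succ N ih =>
    rw [Finset.sum_range_succ, ih]
    by_cases h : x N ≤ greedyRem x s N
    · have hN : N ∈ {n | x n ≤ greedyRem x s n} := h
      simp only [greedyRem, h, if_true, Set.indicator_of_mem hN]
      ring
    · simp [greedyRem, h]

lemma exists_tsum_subtype_eq (hsum : Summable x) (hIF : ∀ n, x n ≤ tailSum x n)
    (hs₀ : 0 ≤ s) (hs : s ≤ ∑' n, x n) : ∃ S : Set ℕ, ∑' n : S, x n = s := by
  set S : Set ℕ := {n | x n ≤ greedyRem x s n}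
  have hrem : Tendsto (greedyRem x s) atTop (𝓝 0) := by
    have hbound : Tendsto (fun n => x n + tailSum x n) atTop (𝓝 0) := by
      simpa using hsum.tendsto_atTop_zero.add (tendsto_tailSum_atTop x)
    exact squeeze_zero (fun n => (greedyRem_mem_Icc hsum hIF hs₀ hs n).1)
      (fun n => (greedyRem_mem_Icc hsum hIF hs₀ hs n).2) hbound
  have hpartial : Tendsto (fun N => ∑ n ∈ Finset.range N, S.indicator x n) atTop (𝓝 s) := by
    have hdiff := (tendsto_const_nhds (x := s)).sub hrem
    rw [sub_zero] at hdiff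
    exact hdiff.congr fun N => (sum_range_indicator_greedyRem N).symm
  refine ⟨S, ?_⟩
  rw [tsum_subtype]
  exact tendsto_nhds_unique (hsum.indicator S).hasSum.tendsto_sum_nat hpartial

lemma exists_subset_Ioi_tsum_eq (hsum : Summable x) (hIF : ∀ n, x n ≤ tailSum x n)
    (k : ℕ) (hs₀ : 0 ≤ s) (hs : s ≤ tailSum x k) :
    ∃ S ⊆ Ioi k, ∑' n : S, x n = s := by
  set y : ℕ → ℝ := fun n => x (k + 1 + n)
  have hy : Summable y := by
    change Summable fun n => x (k + 1 + n)
    simpa only [add_comm] using (summable_nat_add_iff (k + 1)).2 hsum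
  have hyIF (n : ℕ) : y n ≤ tailSum y n := by
    have htail : tailSum y n = tailSum x (k + 1 + n) :=
      tsum_congr fun j => congrArg x (by omega)
    exact htail ▸ hIF _
  obtain ⟨S, hS⟩ := exists_tsum_subtype_eq hy hyIF hs₀ hs
  refine ⟨(k + 1 + ·) '' S, ?_, ?_⟩
  · rintro _ ⟨n, -, rfl⟩
    exact Nat.lt_of_lt_of_le (Nat.lt_succ_self k) (Nat.le_add_right _ _)
  · rw [tsum_image x ((add_right_injective (k + 1)).injOn)]
    exact hS

end Greedy

section Representations

variable {x : ℕ → ℝ}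

lemma exists_set_tsum_eq_sum_add (hsum : Summable x) (hIF : ∀ n, x n ≤ tailSum x n)
    {j : ℕ} (F : Finset ℕ) (hF : ∀ n ∈ F, n ≤ j) {s : ℝ} (hs₀ : 0 ≤ s)
    (hs : s ≤ tailSum x j) :
    ∃ S : Set ℕ, (∀ n ≤ j, n ∈ S ↔ n ∈ F) ∧ ∑' n : S, x n = ∑ n ∈ F, x n + s := by
  obtain ⟨A, hA, hAs⟩ := exists_subset_Ioi_tsum_eq hsum hIF j hs₀ hs
  have hdisj : Disjoint (F : Set ℕ) A :=
    Set.disjoint_left.2 fun n hnF hnA => absurd (hF n hnF) (not_le.2 (hA hnA))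
  refine ⟨F ∪ A, fun n hn => ?_, ?_⟩
  · have : n ∉ A := fun hnA => absurd hn (not_le.2 (hA hnA))
    simp [this]
  · rw [Summable.tsum_union_disjoint hdisj (hsum.subtype _) (hsum.subtype _),
      Finset.tsum_subtype', hAs]

lemma four_le_cardFun {t : ℝ} {S₁ S₂ S₃ S₄ : Set ℕ}
    (h₁ : ∑' n : S₁, x n = t) (h₂ : ∑' n : S₂, x n = t)
    (h₃ : ∑' n : S₃, x n = t) (h₄ : ∑' n : S₄, x n = t) {a b c : ℕ}
    (ha₁ : a ∈ S₁) (ha₂ : a ∉ S₂) (hb₁ : b ∉ S₁) (hb₂ : b ∉ S₂) (hb₃ : b ∈ S₃)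
    (hc₁ : c ∉ S₁) (hc₂ : c ∉ S₂) (hc₃ : c ∉ S₃) (hc₄ : c ∈ S₄) :
    4 ≤ cardFun x t := by
  classical
  have hcard : ({S₁, S₂, S₃, S₄} : Finset (Set ℕ)).card = 4 :=
    Finset.card_eq_four.2 ⟨_, _, _, _, ne_of_mem_of_not_mem' ha₁ ha₂,
      (ne_of_mem_of_not_mem' hb₃ hb₁).symm, (ne_of_mem_of_not_mem' hc₄ hc₁).symm,
      (ne_of_mem_of_not_mem' hb₃ hb₂).symm, (ne_of_mem_of_not_mem' hc₄ hc₂).symm,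
      (ne_of_mem_of_not_mem' hc₄ hc₃).symm, rfl⟩
  have hsub : (({S₁, S₂, S₃, S₄} : Finset (Set ℕ)).card : Cardinal) ≤ cardFun x t := by
    rw [← Cardinal.mk_coe_finset]
    refine Cardinal.mk_subtype_le_of_subset fun S hS => ?_
    simp only [Finset.mem_insert, Finset.mem_singleton] at hS
    rcases hS with rfl | rfl | rfl | rfl <;> assumption
  simpa [hcard] using hsub

lemma mem_achSet_of_cardFun_ne_zero {t : ℝ} (h : cardFun x t ≠ 0) : t ∈ achSet x := by
  obtain ⟨⟨S, hS⟩⟩ := Cardinal.mk_ne_zero_iff.1 h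
  exact ⟨S, hS⟩

/-- With `t = r_k - x_m - r_N`, the four representations are `(k, N] \ {m}`, the same set with
`x_N` traded for a greedy subsum of the tail beyond `N`, `(k, m]` followed by a greedy subsum of
`r_m - x_m - r_N` beyond `m`, and `{k}` followed by a greedy subsum of `t - x_k` beyond `k`.
The elements `N`, `m`, `k` tell them apart. -/
lemma four_le_cardFun_tailSum_sub (hx : ∀ n, 0 ≤ x n) (hsum : Summable x)
    (hIF : ∀ n, x n ≤ tailSum x n) {k m N : ℕ} (hkm : k < m) (hmN : m < N)
    (hN₁ : x m + tailSum x N ≤ tailSum x m) (hN₂ : x k + x m + tailSum x N ≤ tailSum x k) :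
    4 ≤ cardFun x (tailSum x k - x m - tailSum x N) := by
  have hrN := tailSum_nonneg hx N
  have hxm := hx m
  have hxk := hx k
  have hIocN := sum_Ioc_add_tailSum hsum (hkm.trans hmN).le
  have hIocm := sum_Ioc_add_tailSum hsum hkm.le
  set F₁ := (Finset.Ioc k N).erase m
  set F₂ := F₁.erase N
  have hmF : m ∈ Finset.Ioc k N := Finset.mem_Ioc.2 ⟨hkm, hmN.le⟩
  have hNF : N ∈ F₁ := by simp [F₁, hmN.ne', hkm.trans hmN]
  have hF₁ := Finset.sum_erase_add _ x hmF
  have hF₂ := Finset.sum_erase_add _ x hNF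
  have hF₂N : ∀ n ∈ F₂, n ≤ N := fun n hn => by simp [F₂, F₁] at hn; omega
  obtain ⟨S₂, hS₂, hsum₂⟩ := exists_set_tsum_eq_sum_add hsum hIF F₂ hF₂N (hx N) (hIF N)
  obtain ⟨S₃, hS₃, hsum₃⟩ := exists_set_tsum_eq_sum_add hsum hIF (Finset.Ioc k m)
    (fun n hn => (Finset.mem_Ioc.1 hn).2) (s := tailSum x m - x m - tailSum x N)
    (by linarith) (by linarith)
  obtain ⟨S₄, hS₄, hsum₄⟩ := exists_set_tsum_eq_sum_add hsum hIF {k}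
    (fun n hn => (Finset.mem_singleton.1 hn).le) (s := tailSum x k - x m - tailSum x N - x k)
    (by linarith) (by linarith)
  refine four_le_cardFun (S₁ := F₁) (a := N) (b := m) (c := k)
    (by rw [Finset.tsum_subtype']; linarith) (by rw [hsum₂]; linarith) (by rw [hsum₃]; linarith)
    (by rw [hsum₄, Finset.sum_singleton]; ring)
    hNF ?_ (by simp [F₁]) ?_ ?_ (by simp [F₁]) ?_ ?_ ?_
  · simp [hS₂ N le_rfl, F₂]
  · simp [hS₂ m hmN.le, F₂, F₁]
  · simp [hS₃ m le_rfl, hkm]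
  · simp [hS₂ k (hkm.trans hmN).le, F₂, F₁]
  · simp [hS₃ k hkm.le]
  · simp [hS₄ k le_rfl]

end Representations

theorem stmt11_general (x : ℕ → ℝ) (hpos : ∀ n, 0 < x n)
    (hsum : Summable x) (hIF : ∀ n, x n ≤ tailSum x n)
    (k m : ℕ) (hkm : k < m) (h1 : x m < tailSum x m) (h2 : x k + x m < tailSum x k) :
    ∃ t ∈ achSet x, 4 ≤ cardFun x t := by
  have hr := tendsto_tailSum_atTop x
  obtain ⟨N, hN₁, hN₂, hmN⟩ :=
    ((hr.eventually (gt_mem_nhds (sub_pos.2 h1))).and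
      ((hr.eventually (gt_mem_nhds (by linarith : 0 < tailSum x k - x k - x m))).and
        (eventually_gt_atTop m))).exists
  have h4 := four_le_cardFun_tailSum_sub (fun n => (hpos n).le) hsum hIF hkm hmN
    (by linarith) (by linarith)
  exact ⟨_, mem_achSet_of_cardFun_ne_zero (ne_bot_of_le_ne_bot (by norm_num) h4), h4⟩

theorem stmt11 (x : ℕ → ℝ) (hpos : ∀ n, 0 < x n) (hanti : ∀ n, x (n + 1) ≤ x n)
    (hsum : Summable x) (hIF : ∀ n, x n ≤ tailSum x n)
    (k m : ℕ) (hkm : k < m) (h1 : x m < tailSum x m) (h2 : x k + x m < tailSum x k) :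
    ∃ t ∈ achSet x, 4 ≤ cardFun x t :=
  stmt11_general x hpos hsum hIF k m hkm h1 h2
end

section
/- Let x = (x_n) be a summable positive sequence with cardinal function f. If for every y > 0, the range of the cardinal function of the sequence obtained by prepending y to x equals the range of f, then rng(f) ⊇ ℕ, i.e., every positive integer is attained by f. -/
open Set

/-! Splitting a representation of `t` over `(y, x₁, x₂, …)` according to whether it uses `y`
gives `f_{(y,x)}(t) = f(t - y) + f(t)`. For `t > 0` take `y = t`: positivity makes `∅` the only
representation of `0`, so `f_{(t,x)}(t) = f(t) + 1`, and this value lies in the range of `f`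
by hypothesis. It is attained at some `t' > 0`, again because `f(0) = 1`, so the argument can be
repeated. Starting from `f(∑ xₙ) = 1`, every positive integer is reached. -/

lemma insert_zero_image_succ_preimage {S : Set ℕ} (h : 0 ∈ S) :
    insert 0 (Nat.succ '' (Nat.succ ⁻¹' S)) = S := by
  ext (_ | n) <;> simp [h]

lemma image_succ_preimage {S : Set ℕ} (h : 0 ∉ S) : Nat.succ '' (Nat.succ ⁻¹' S) = S := by
  ext (_ | n) <;> simp [h]

lemma nonneg_of_mem_achSet {x : ℕ → ℝ} (hx : ∀ n, 0 ≤ x n) {t : ℝ} (ht : t ∈ achSet x) :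
    0 ≤ t := by
  obtain ⟨S, rfl⟩ := ht
  exact tsum_nonneg fun n => hx n

section Prepend

variable (y : ℝ) {x : ℕ → ℝ}

lemma summable_prepend (hx : Summable x) : Summable (prepend y x) :=
  (summable_nat_add_iff 1).mp hx

lemma tsum_image_succ_prepend (T : Set ℕ) :
    ∑' n : Nat.succ '' T, prepend y x n = ∑' n : T, x n :=
  tsum_image _ Nat.succ_injective.injOn

lemma tsum_insert_zero_image_succ_prepend (hx : Summable x) (T : Set ℕ) :
    ∑' n : (insert 0 (Nat.succ '' T) : Set ℕ), prepend y x n = y + ∑' n : T, x n := by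
  have hdisj : Disjoint {0} (Nat.succ '' T) := by simp
  rw [Set.insert_eq, Summable.tsum_union_disjoint hdisj ((Set.finite_singleton 0).summable _)
    ((summable_prepend y hx).subtype _), tsum_singleton, tsum_image_succ_prepend]
  rfl

lemma mem_achSet_prepend {t : ℝ} (ht : t ∈ achSet x) : t ∈ achSet (prepend y x) := by
  obtain ⟨T, rfl⟩ := ht
  exact ⟨Nat.succ '' T, tsum_image_succ_prepend y T⟩

lemma setOf_tsum_prepend_eq (hx : Summable x) (t : ℝ) :
    {S : Set ℕ | ∑' n : S, prepend y x n = t} =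
      (fun T => insert 0 (Nat.succ '' T)) '' {T | ∑' n : T, x n = t - y} ∪
        (Nat.succ '' ·) '' {T | ∑' n : T, x n = t} := by
  ext S
  constructor
  · intro hS
    by_cases h0 : 0 ∈ S
    · have hsplit := tsum_insert_zero_image_succ_prepend y hx (Nat.succ ⁻¹' S)
      rw [insert_zero_image_succ_preimage h0, hS] at hsplit
      exact .inl ⟨_, by change _ = _; linarith, insert_zero_image_succ_preimage h0⟩
    · have hsplit := tsum_image_succ_prepend y (x := x) (Nat.succ ⁻¹' S)
      rw [image_succ_preimage h0, hS] at hsplit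
      exact .inr ⟨_, hsplit.symm, image_succ_preimage h0⟩
  · rintro (⟨T, hT, rfl⟩ | ⟨T, hT, rfl⟩)
    · change _ = t
      rw [tsum_insert_zero_image_succ_prepend y hx, show ∑' n : T, x n = t - y from hT]
      ring
    · exact (tsum_image_succ_prepend y T).trans hT

lemma cardFun_prepend (hx : Summable x) (t : ℝ) :
    cardFun (prepend y x) t = cardFun x (t - y) + cardFun x t := by
  have hdisj : Disjoint ((fun T => insert 0 (Nat.succ '' T)) '' {T | ∑' n : T, x n = t - y})
      ((Nat.succ '' ·) '' {T | ∑' n : T, x n = t}) := by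
    rw [Set.disjoint_left]
    rintro _ ⟨T, -, rfl⟩ ⟨T', -, h⟩
    obtain ⟨m, -, hm⟩ : 0 ∈ Nat.succ '' T' := by
      rw [show Nat.succ '' T' = _ from h]
      exact Set.mem_insert _ _
    exact Nat.succ_ne_zero m hm
  have hinj_insert : Function.Injective fun T : Set ℕ => insert 0 (Nat.succ '' T) :=
    fun T T' h => by
      ext n
      simpa using congrArg (n + 1 ∈ ·) h
  change Cardinal.mk {S : Set ℕ | ∑' n : S, prepend y x n = t} = _
  rw [setOf_tsum_prepend_eq y hx, Cardinal.mk_union_of_disjoint hdisj,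
    Cardinal.mk_image_eq hinj_insert,
    Cardinal.mk_image_eq (Set.image_injective.mpr Nat.succ_injective)]
  rfl

end Prepend

section Positive

variable {x : ℕ → ℝ} (hpos : ∀ n, 0 < x n) (hx : Summable x)
include hpos hx

lemma eq_empty_of_tsum_subtype_eq_zero {S : Set ℕ} (h : ∑' n : S, x n = 0) : S = ∅ :=
  Set.eq_empty_iff_forall_notMem.mpr fun m hm =>
    (Summable.tsum_pos (hx.subtype S) (fun n : S => (hpos n).le) ⟨m, hm⟩ (hpos m)).ne' h

lemma eq_univ_of_tsum_subtype_eq_tsum {S : Set ℕ} (h : ∑' n : S, x n = ∑' n, x n) :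
    S = Set.univ := by
  have hcompl : ∑' n : ↥Sᶜ, x n = 0 := by
    linarith [Summable.tsum_add_tsum_compl (hx.subtype S) (hx.subtype Sᶜ)]
  exact Set.compl_empty_iff.mp (eq_empty_of_tsum_subtype_eq_zero hpos hx hcompl)

lemma cardFun_zero : cardFun x 0 = 1 := by
  change Cardinal.mk {S : Set ℕ | ∑' n : S, x n = 0} = 1
  rw [show {S : Set ℕ | ∑' n : S, x n = 0} = {∅} by
    ext S
    exact ⟨eq_empty_of_tsum_subtype_eq_zero hpos hx, by rintro rfl; simp⟩]
  exact Cardinal.mk_singleton _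

lemma cardFun_tsum : cardFun x (∑' n, x n) = 1 := by
  change Cardinal.mk {S : Set ℕ | ∑' n : S, x n = ∑' n, x n} = 1
  rw [show {S : Set ℕ | ∑' n : S, x n = ∑' n, x n} = {Set.univ} by
    ext S
    exact ⟨eq_univ_of_tsum_subtype_eq_tsum hpos hx, by rintro rfl; exact tsum_univ x⟩]
  exact Cardinal.mk_singleton _

lemma exists_pos_cardFun_eq_succ
    (hrange : ∀ y : ℝ, 0 < y →
      cardFun (prepend y x) '' achSet (prepend y x) = cardFun x '' achSet x) (n : ℕ) :
    ∃ t ∈ achSet x, 0 < t ∧ cardFun x t = n + 1 := by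
  induction n with
  | zero =>
    refine ⟨∑' n, x n, ⟨Set.univ, tsum_univ x⟩, hx.tsum_pos (fun n => (hpos n).le) 0 (hpos 0), ?_⟩
    simpa using cardFun_tsum hpos hx
  | succ n ih =>
    obtain ⟨t, ht, htpos, hcard⟩ := ih
    have hmem : 1 + (n + 1 : Cardinal) ∈ cardFun (prepend t x) '' achSet (prepend t x) :=
      ⟨t, mem_achSet_prepend t ht, by
        rw [cardFun_prepend t hx, sub_self, cardFun_zero hpos hx, hcard]⟩
    rw [hrange t htpos] at hmem
    obtain ⟨t', ht', hcard'⟩ := hmem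
    have hne : t' ≠ 0 := by
      rintro rfl
      rw [cardFun_zero hpos hx] at hcard'
      have : (1 : ℕ) = 1 + (n + 1) := by exact_mod_cast hcard'
      omega
    refine ⟨t', ht', (nonneg_of_mem_achSet (fun n => (hpos n).le) ht').lt_of_ne' hne, ?_⟩
    rw [hcard']
    push_cast
    ring

end Positive

theorem stmt13 (x : ℕ → ℝ) (hpos : ∀ n, 0 < x n) (hsum : Summable x)
    (hCis : ∀ y : ℝ, 0 < y →
      cardFun (prepend y x) '' achSet (prepend y x) = cardFun x '' achSet x) :
    ∀ n : ℕ, 0 < n → (n : Cardinal) ∈ cardFun x '' achSet x := by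
  intro n hn
  obtain ⟨k, rfl⟩ := Nat.exists_eq_succ_of_ne_zero hn.ne'
  obtain ⟨t, ht, -, hcard⟩ := exists_pos_cardFun_eq_succ hpos hsum hCis k
  exact ⟨t, ht, by rw [hcard]; push_cast; rfl⟩
end
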